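/- Let d ∈ ℕ, θ ∈ ℝ^d, and i, j ∈ {1,…,d}. Let F : ℝ^d → ℝ be three times continuously differentiable on a neighborhood of θ. For ε > 0 set λ₁(ε) = F(θ + ε(eᵢ+eⱼ)), λ₂(ε) = F(θ + εeᵢ), λ₃(ε) = F(θ + εeⱼ), λ₄(ε) = F(θ), and define n(ε) := λ₁(ε) + λ₂(ε) − 2·min(λ₁(ε), λ₂(ε)) + λ₃(ε) + λ₄(ε) − 2·min(λ₃(ε), λ₄(ε)) − 2·min(λ₁(ε) − min(λ₁(ε), λ₂(ε)), λ₃(ε) − min(λ₃(ε), λ₄(ε))) − 2·min(λ₂(ε) − min(λ₁(ε), λ₂(ε)), λ₄(ε) − min(λ₃(ε), λ₄(ε))). If ∂F/∂θⱼ(θ) > 0 and ∂²F/∂θᵢ∂θⱼ(θ) < 0, then n(ε)/ε² → −∂²F/∂θᵢ∂θⱼ(θ) as ε → 0⁺. -/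

import Mathlib

open Filter Topology Asymptotics

/-! When `∂ⱼF(θ) > 0`, both jumps `λ₁ - λ₂` and `λ₃ - λ₄` are `ε ∂ⱼF(θ) + O(ε²)`, hence positive
for small `ε > 0`. The splitting rate then collapses to `|(λ₁ - λ₂) - (λ₃ - λ₄)|`, the absolute
value of a mixed second difference of `F`, which is `ε² ∂ᵢ∂ⱼF(θ) + o(ε²)` by Taylor's formula.
Hence `n(ε)/ε² → |∂ᵢ∂ⱼF(θ)| = -∂ᵢ∂ⱼF(θ)`. -/

def splittingRate (l₁ l₂ l₃ l₄ : ℝ) : ℝ :=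
  l₁ + l₂ - 2 * min l₁ l₂ + l₃ + l₄ - 2 * min l₃ l₄
    - 2 * min (l₁ - min l₁ l₂) (l₃ - min l₃ l₄)
    - 2 * min (l₂ - min l₁ l₂) (l₄ - min l₃ l₄)

theorem splittingRate_eq_abs_of_le {l₁ l₂ l₃ l₄ : ℝ} (h₁₂ : l₂ ≤ l₁) (h₃₄ : l₄ ≤ l₃) :
    splittingRate l₁ l₂ l₃ l₄ = |(l₁ - l₂) - (l₃ - l₄)| := by
  rw [splittingRate, min_eq_right h₁₂, min_eq_right h₃₄, sub_self, sub_self, min_self]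
  rcases le_total (l₁ - l₂) (l₃ - l₄) with h | h
  · rw [min_eq_left h, abs_of_nonpos (sub_nonpos.2 h)]; ring
  · rw [min_eq_right h, abs_of_nonneg (sub_nonneg.2 h)]; ring

theorem isLittleO_sq_of_comp_mul {g : ℝ → ℝ} {c : ℝ} (hc : 0 < c)
    (h : (fun t => g (t * c)) =o[𝓝[>] 0] fun t => t ^ 2) : g =o[𝓝[>] 0] fun t => t ^ 2 := by
  have hdiv : Tendsto (c⁻¹ * ·) (𝓝[>] 0) (𝓝[>] 0) :=
    tendsto_iff_comap.2 (comap_mulLeft_nhdsGT_zero (inv_pos.2 hc)).ge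
  have hO : (fun t : ℝ => (c⁻¹ * t) ^ 2) =O[𝓝[>] 0] fun t => t ^ 2 := by
    refine (isBigO_const_mul_self ((c ^ 2)⁻¹) (fun t : ℝ => t ^ 2) _).congr_left fun t => ?_
    ring
  refine ((h.comp_tendsto hdiv).trans_isBigO hO).congr_left fun t => ?_
  simp [mul_comm _ c, hc.ne']

section SecondDifference

variable {E : Type*} [NormedAddCommGroup E] [NormedSpace ℝ E]

theorem isLittleO_second_difference {F : E → ℝ} {f' : E → E →L[ℝ] ℝ}
    {f'' : E →L[ℝ] E →L[ℝ] ℝ} {θ : E} (hf : ∀ᶠ y in 𝓝 θ, HasFDerivAt F (f' y) y)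
    (hf'' : HasFDerivAt f' f'' θ) (v w : E) :
    (fun t : ℝ => F (θ + t • (v + w)) - F (θ + t • v) - F (θ + t • w) + F θ - t ^ 2 * f'' v w)
      =o[𝓝[>] 0] fun t => t ^ 2 := by
  obtain ⟨r, hr, hball⟩ := Metric.eventually_nhds_iff_ball.1 hf
  have hint : interior (Metric.ball θ r) = Metric.ball θ r := Metric.isOpen_ball.interior_eq
  have hnear : ∀ u : E, ∀ᶠ c in 𝓝[>] (0 : ℝ), θ + c • u ∈ interior (Metric.ball θ r) := by
    intro u
    have : Tendsto (fun c : ℝ => θ + c • u) (𝓝 0) (𝓝 θ) :=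
      (continuous_const.add (continuous_id.smul continuous_const)).tendsto' 0 θ (by simp)
    rw [hint]
    exact (this.eventually (Metric.ball_mem_nhds θ hr)).filter_mono nhdsWithin_le_nhds
  -- Taylor's estimate needs the whole rectangle inside the ball: prove it for `c • v, c • w`.
  obtain ⟨c, ⟨hv, hvw, hw⟩, hc⟩ :=
    ((hnear v).and ((hnear (v + w)).and (hnear w))).and self_mem_nhdsWithin |>.exists
  have hF : ∀ y ∈ interior (Metric.ball θ r), HasFDerivAt F (f' y) y := fun y hy =>
    hball y (hint ▸ hy)
  have A := (convex_ball θ r).taylor_approx_two_segment hF (Metric.mem_ball_self hr)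
    hf''.hasFDerivWithinAt hv (by rwa [add_assoc, ← smul_add])
  have B := (convex_ball θ r).taylor_approx_two_segment hF (Metric.mem_ball_self hr)
    hf''.hasFDerivWithinAt (v := 0) (by simpa [hint] using hr) (by simpa using hw)
  refine isLittleO_sq_of_comp_mul hc ((A.sub B).congr_left fun t => ?_)
  simp only [smul_zero, add_zero, map_smul, map_zero, zero_apply, smul_apply, smul_eq_mul,
    smul_smul, smul_add, add_assoc]
  ring_nf

theorem tendsto_second_difference_div_sq {F : E → ℝ} {f' : E → E →L[ℝ] ℝ}
    {f'' : E →L[ℝ] E →L[ℝ] ℝ} {θ : E} (hf : ∀ᶠ y in 𝓝 θ, HasFDerivAt F (f' y) y)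
    (hf'' : HasFDerivAt f' f'' θ) (v w : E) :
    Tendsto (fun t : ℝ => (F (θ + t • (v + w)) - F (θ + t • v) - F (θ + t • w) + F θ) / t ^ 2)
      (𝓝[>] 0) (𝓝 (f'' v w)) := by
  have h := ((isLittleO_second_difference hf hf'' v w).tendsto_div_nhds_zero).add_const (f'' v w)
  rw [zero_add] at h
  refine h.congr' ?_
  filter_upwards [self_mem_nhdsWithin] with t (ht : 0 < t)
  field_simp
  ring

end SecondDifference

theorem eventually_pos_of_tendsto_inv_smul {g : ℝ → ℝ} {a : ℝ}
    (h : Tendsto (fun t => t⁻¹ • g t) (𝓝[>] 0) (𝓝 a)) (ha : 0 < a) :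
    ∀ᶠ t in 𝓝[>] 0, 0 < g t := by
  filter_upwards [h.eventually (eventually_gt_nhds ha), self_mem_nhdsWithin] with t hg (ht : 0 < t)
  exact pos_of_mul_pos_right hg (inv_pos.2 ht).le

/-- Second-order Taylor expansion of the residual splitting rate `n_k(x, θ̂)` of the
four-fold split coupling, mixed-sign case (eq. (A.3) of the paper):
`n(ε)/ε² → −∂²F/∂θᵢ∂θⱼ(θ)` as `ε → 0⁺` when `∂F/∂θⱼ(θ) > 0` and
`∂²F/∂θᵢ∂θⱼ(θ) < 0`. -/
theorem splitting_rate_second_order_expansion_mixed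
    (d : ℕ) (θ : EuclideanSpace ℝ (Fin d)) (i j : Fin d)
    (F : EuclideanSpace ℝ (Fin d) → ℝ) (hF : ContDiffAt ℝ 3 F θ)
    (hj : 0 < fderiv ℝ F θ (EuclideanSpace.single j 1))
    (hij : fderiv ℝ (fun x => fderiv ℝ F x (EuclideanSpace.single j 1)) θ
      (EuclideanSpace.single i 1) < 0) :
    Tendsto (fun ε : ℝ =>
      let l1 : ℝ := F (θ + ε • (EuclideanSpace.single i 1 + EuclideanSpace.single j 1))
      let l2 : ℝ := F (θ + ε • EuclideanSpace.single i 1)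
      let l3 : ℝ := F (θ + ε • EuclideanSpace.single j 1)
      let l4 : ℝ := F θ
      (l1 + l2 - 2 * min l1 l2 + l3 + l4 - 2 * min l3 l4
        - 2 * min (l1 - min l1 l2) (l3 - min l3 l4)
        - 2 * min (l2 - min l1 l2) (l4 - min l3 l4)) / ε ^ 2)
      (𝓝[>] 0)
      (𝓝 (-(fderiv ℝ (fun x => fderiv ℝ F x (EuclideanSpace.single j 1)) θ
        (EuclideanSpace.single i 1)))) := by
  set v : EuclideanSpace ℝ (Fin d) := EuclideanSpace.single i 1
  set w : EuclideanSpace ℝ (Fin d) := EuclideanSpace.single j 1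
  have hf : ∀ᶠ y in 𝓝 θ, HasFDerivAt F (fderiv ℝ F y) y := by
    filter_upwards [hF.eventually (by simp)] with y hy
    exact (hy.differentiableAt (by simp)).hasFDerivAt
  have hf'' : HasFDerivAt (fderiv ℝ F) (fderiv ℝ (fderiv ℝ F) θ) θ :=
    ((hF.fderiv_right (m := 1) (by norm_num)).differentiableAt (by simp)).hasFDerivAt
  have hD : fderiv ℝ (fun x => fderiv ℝ F x w) θ v = fderiv ℝ (fderiv ℝ F) θ v w := by
    rw [(hf''.clm_apply (hasFDerivAt_const w θ)).fderiv]
    simp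
  rw [hD] at hij ⊢
  have hS := tendsto_second_difference_div_sq hf hf'' v w
  have hb := (hf.self_of_nhds.hasLineDerivAt w).tendsto_slope_zero_right
  have ha : Tendsto (fun t : ℝ => t⁻¹ • (F (θ + t • (v + w)) - F (θ + t • v))) (𝓝[>] 0)
      (𝓝 (fderiv ℝ F θ w)) := by
    -- `λ₁ - λ₂ = (λ₃ - λ₄) + t² · (second difference quotient)`
    have h := hb.add ((tendsto_nhdsWithin_of_tendsto_nhds tendsto_id).mul hS)
    rw [zero_mul, add_zero] at h
    refine h.congr' ?_
    filter_upwards [self_mem_nhdsWithin] with t (ht : 0 < t)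
    simp only [smul_eq_mul, id]
    field_simp
    ring
  rw [← abs_of_neg hij]
  refine hS.abs.congr' ?_
  filter_upwards [eventually_pos_of_tendsto_inv_smul ha hj,
    eventually_pos_of_tendsto_inv_smul hb hj] with t hat hbt
  show _ = splittingRate _ _ _ _ / t ^ 2
  rw [splittingRate_eq_abs_of_le (sub_pos.1 hat).le (sub_pos.1 hbt).le, abs_div, abs_sq]
  congr 2
  ring
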